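/- arXiv:2107.14778 — 3 statements merged into one kernel-verified Lean document; each statement's English description precedes it below -/
import Mathlib

section
/- Suppose a₁, a₂, a₃ are positive reals with a₁² + a₂² + a₃² = 1 satisfying the three equations: a₁ + a₂ - a₃ - a₁a₂² - a₁²a₂ - a₁a₂a₃ = 0, a₁ - a₂ + a₃ - a₁a₃² - a₁²a₃ - a₁a₂a₃ = 0, and -a₁ + a₂ + a₃ - a₂a₃² - a₂²a₃ - a₁a₂a₃ = 0. Then a₁ = a₂ = a₃ = 1/√3. -/
open Real

/-- The symmetric system of three polynomial equations on the unit sphere forces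
`a₁ = a₂ = a₃ = 1/√3`. -/
theorem three_dim_system (a₁ a₂ a₃ : ℝ) (h₁ : 0 < a₁) (h₂ : 0 < a₂) (h₃ : 0 < a₃)
    (hsum : a₁ ^ 2 + a₂ ^ 2 + a₃ ^ 2 = 1)
    (e₁ : a₁ + a₂ - a₃ - a₁ * a₂ ^ 2 - a₁ ^ 2 * a₂ - a₁ * a₂ * a₃ = 0)
    (e₂ : a₁ - a₂ + a₃ - a₁ * a₃ ^ 2 - a₁ ^ 2 * a₃ - a₁ * a₂ * a₃ = 0)
    (e₃ : -a₁ + a₂ + a₃ - a₂ * a₃ ^ 2 - a₂ ^ 2 * a₃ - a₁ * a₂ * a₃ = 0) :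
    a₁ = 1 / Real.sqrt 3 ∧ a₂ = 1 / Real.sqrt 3 ∧ a₃ = 1 / Real.sqrt 3 := by
  have hs : 0 < a₁ + a₂ + a₃ := by linarith
  -- summing the equations gives s * (1 - p) = 0 where p = a₁a₂+a₁a₃+a₂a₃
  have hp : a₁ * a₂ + a₁ * a₃ + a₂ * a₃ = 1 := by
    have key : (a₁ + a₂ + a₃) * (1 - (a₁ * a₂ + a₁ * a₃ + a₂ * a₃)) = 0 := by
      linear_combination e₁ + e₂ + e₃
    rcases mul_eq_zero.mp key with h | h
    · linarith
    · linarith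
  have hs2 : (a₁ + a₂ + a₃) ^ 2 = 3 := by nlinarith [hsum, hp]
  have hslt : a₁ + a₂ + a₃ < 2 := by nlinarith [hs2, hs]
  have h1lt : a₁ < 1 := by nlinarith [sq_nonneg a₂, sq_nonneg a₃, h₂, h₃]
  have h3lt : a₃ < 1 := by nlinarith [sq_nonneg a₁, sq_nonneg a₂, h₁, h₂]
  have f1 : (a₂ - a₃) * (2 - a₁ * (a₁ + a₂ + a₃)) = 0 := by linear_combination e₁ - e₂
  have f2 : (a₁ - a₂) * (2 - a₃ * (a₁ + a₂ + a₃)) = 0 := by linear_combination e₂ - e₃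
  have g1 : a₁ * (a₁ + a₂ + a₃) < 2 := by nlinarith [h1lt, hslt, hs]
  have g2 : a₃ * (a₁ + a₂ + a₃) < 2 := by nlinarith [h3lt, hslt, hs]
  have h23 : a₂ = a₃ := by
    rcases mul_eq_zero.mp f1 with h | h
    · linarith
    · linarith
  have h12 : a₁ = a₂ := by
    rcases mul_eq_zero.mp f2 with h | h
    · linarith
    · linarith
  have hsq3 : (0:ℝ) < Real.sqrt 3 := Real.sqrt_pos.mpr (by norm_num)
  have hsq3' : Real.sqrt 3 ^ 2 = 3 := Real.sq_sqrt (by norm_num)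
  have h3a : 3 * a₁ ^ 2 = 1 := by
    linear_combination hsum + (a₁ + a₂) * h12 + (a₁ + a₃) * h12 + (a₁ + a₃) * h23
  have ha : a₁ = 1 / Real.sqrt 3 := by
    rw [eq_div_iff (ne_of_gt hsq3)]
    have fac : (a₁ * Real.sqrt 3 - 1) * (a₁ * Real.sqrt 3 + 1) = 0 := by
      linear_combination a₁ ^ 2 * hsq3' + h3a
    rcases mul_eq_zero.mp fac with h | h
    · linarith
    · nlinarith [mul_pos h₁ hsq3]
  exact ⟨ha, h12 ▸ ha, h23 ▸ h12 ▸ ha⟩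
end

section
/- The only positive real solution (a₁, a₃, a₄) of the system: (a₁ + a₃ + a₄)·a₄ = 1, 2a₁² + a₃² + a₄² = 1, and (2a₁ + a₃ - a₄)²(1 + a₁a₃) = 8a₁²a₃(a₁ + a₃), is a₁ = 1/√10, a₃ = a₄ = 2/√10. -/
open Real

/-!
Put `s = a₁ + a₃`. Subtracting the first two equations gives `a₄ s = 2a₁² + a₃²`, hence
`(2a₁ + a₃ - a₄) s = 3a₁a₃`, so eliminating `a₄` leaves two equations in `a₁, a₃`:
`Q(s² + Q) = s²` with `Q = 2a₁² + a₃²` from the second equation, and `9a₃(1 + a₁a₃) = 8s³` from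
the third. Combining them so that their lower-degree parts cancel gives a homogeneous quintic,
which factors as `(2a₁ - a₃)` times a quartic that is positive on the positive quadrant. Thus `a₃ = 2a₁`, then
`a₄ = 2a₁`, and the second equation reads `10a₁² = 1`.
-/

section FourDimSystem

variable {x y z : ℝ}

lemma quartic_pos (hx : 0 < x) (hy : 0 ≤ y) :
    0 < 10 * y ^ 4 + 7 * x * y ^ 3 + 15 * x ^ 2 * y ^ 2 - 5 * x ^ 3 * y + 4 * x ^ 4 := by
  have hq : 0 < 15 * y ^ 2 - 5 * x * y + 4 * x ^ 2 := by
    nlinarith [sq_nonneg (8 * x - 5 * y), sq_nonneg y, pow_pos hx 2]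
  have : 0 ≤ 10 * y ^ 4 + 7 * x * y ^ 3 := by positivity
  nlinarith [mul_pos (pow_pos hx 2) hq]

lemma cubic_relation (hx : 0 < x) (hy : 0 < y) (hz : z * (x + y) = 2 * x ^ 2 + y ^ 2)
    (h : (2 * x + y - z) ^ 2 * (1 + x * y) = 8 * x ^ 2 * y * (x + y)) :
    9 * y * (1 + x * y) = 8 * (x + y) ^ 3 := by
  have hlin : (2 * x + y - z) * (x + y) = 3 * x * y := by linear_combination -hz
  have hcancel : x ^ 2 * y * (9 * y * (1 + x * y) - 8 * (x + y) ^ 3) = 0 := by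
    linear_combination (x + y) ^ 2 * h
      - (1 + x * y) * ((2 * x + y - z) * (x + y) + 3 * x * y) * hlin
  have hxy : x ^ 2 * y ≠ 0 := by positivity
  linear_combination (mul_eq_zero.mp hcancel).resolve_left hxy

lemma eq_two_mul_of_relations (hx : 0 < x) (hy : 0 < y)
    (hquad : (2 * x ^ 2 + y ^ 2) * ((x + y) ^ 2 + (2 * x ^ 2 + y ^ 2)) = (x + y) ^ 2)
    (hcubic : 9 * y * (1 + x * y) = 8 * (x + y) ^ 3) :
    y = 2 * x := by
  have hquintic : (2 * x - y) *
      (10 * y ^ 4 + 7 * x * y ^ 3 + 15 * x ^ 2 * y ^ 2 - 5 * x ^ 3 * y + 4 * x ^ 4) = 0 := by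
    linear_combination -(x + y) ^ 2 * hcubic - 9 * y * hquad
  linear_combination -(mul_eq_zero.mp hquintic).resolve_right (quartic_pos hx hy.le).ne'

end FourDimSystem

theorem four_dim_system_one_general (a₁ a₃ a₄ : ℝ) (h₁ : 0 < a₁) (h₃ : 0 < a₃)
    (e₁ : (a₁ + a₃ + a₄) * a₄ = 1)
    (e₂ : 2 * a₁ ^ 2 + a₃ ^ 2 + a₄ ^ 2 = 1)
    (e₃ : (2 * a₁ + a₃ - a₄) ^ 2 * (1 + a₁ * a₃) = 8 * a₁ ^ 2 * a₃ * (a₁ + a₃)) :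
    a₁ = 1 / Real.sqrt 10 ∧ a₃ = 2 / Real.sqrt 10 ∧ a₄ = 2 / Real.sqrt 10 := by
  have hz : a₄ * (a₁ + a₃) = 2 * a₁ ^ 2 + a₃ ^ 2 := by linear_combination e₁ - e₂
  have hquad :
      (2 * a₁ ^ 2 + a₃ ^ 2) * ((a₁ + a₃) ^ 2 + (2 * a₁ ^ 2 + a₃ ^ 2)) = (a₁ + a₃) ^ 2 := by
    linear_combination (a₁ + a₃) ^ 2 * e₂ - (a₄ * (a₁ + a₃) + 2 * a₁ ^ 2 + a₃ ^ 2) * hz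
  have ha₃ : a₃ = 2 * a₁ :=
    eq_two_mul_of_relations h₁ h₃ hquad (cubic_relation h₁ h₃ hz e₃)
  have ha₄ : a₄ = 2 * a₁ := by
    rw [ha₃] at hz
    exact mul_right_cancel₀ (by positivity : a₁ + 2 * a₁ ≠ 0) (by linear_combination hz)
  have hsq : a₁ ^ 2 = 10⁻¹ := by
    rw [ha₃, ha₄] at e₂
    linear_combination e₂ / 10
  have ha₁ : a₁ = 1 / Real.sqrt 10 := by
    rw [← Real.sqrt_sq h₁.le, hsq, Real.sqrt_inv, one_div]
  refine ⟨ha₁, ?_, ?_⟩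
  · rw [ha₃, ha₁]; ring
  · rw [ha₄, ha₁]; ring

/-- The only positive solution of the system
`(a₁+a₃+a₄)a₄ = 1`, `2a₁² + a₃² + a₄² = 1`, `(2a₁+a₃-a₄)²(1+a₁a₃) = 8a₁²a₃(a₁+a₃)`
is `a₁ = 1/√10`, `a₃ = a₄ = 2/√10`. -/
theorem four_dim_system_one (a₁ a₃ a₄ : ℝ) (h₁ : 0 < a₁) (h₃ : 0 < a₃) (h₄ : 0 < a₄)
    (e₁ : (a₁ + a₃ + a₄) * a₄ = 1)
    (e₂ : 2 * a₁ ^ 2 + a₃ ^ 2 + a₄ ^ 2 = 1)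
    (e₃ : (2 * a₁ + a₃ - a₄) ^ 2 * (1 + a₁ * a₃) = 8 * a₁ ^ 2 * a₃ * (a₁ + a₃)) :
    a₁ = 1 / Real.sqrt 10 ∧ a₃ = 2 / Real.sqrt 10 ∧ a₄ = 2 / Real.sqrt 10 :=
  four_dim_system_one_general a₁ a₃ a₄ h₁ h₃ e₁ e₂ e₃
end

section
/- The system of equations 3a₁² + a₄² = 1 and 8a₁³(1 - a₄²) - (3a₁ - a₄)²(a₁ + a₄)(1 - a₁a₄) = 0 in positive reals a₁, a₄ with the additional constraint a₁ > 1/√12 has the unique solution a₁ = a₄ = 1/2. -/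
open Real

/-- The system `3a₁² + a₄² = 1`, `8a₁³(1-a₄²) - (3a₁-a₄)²(a₁+a₄)(1-a₁a₄) = 0` in positive
reals with `a₁ > 1/√12` has the unique solution `a₁ = a₄ = 1/2`. -/
theorem four_dim_system_two (a₁ a₄ : ℝ) (h₁ : 0 < a₁) (h₄ : 0 < a₄)
    (hbig : 1 / Real.sqrt 12 < a₁)
    (e₁ : 3 * a₁ ^ 2 + a₄ ^ 2 = 1)
    (e₂ : 8 * a₁ ^ 3 * (1 - a₄ ^ 2) -
      (3 * a₁ - a₄) ^ 2 * (a₁ + a₄) * (1 - a₁ * a₄) = 0) :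
    a₁ = 1 / 2 ∧ a₄ = 1 / 2 := by
  have h12 : (0:ℝ) < Real.sqrt 12 := Real.sqrt_pos.mpr (by norm_num)
  have hx : 1 / 12 < a₁ ^ 2 := by
    have h0 : (0:ℝ) ≤ 1 / Real.sqrt 12 := by positivity
    have := pow_lt_pow_left₀ hbig h0 (n := 2) (by norm_num)
    have hs : (Real.sqrt 12) ^ 2 = 12 := Real.sq_sqrt (by norm_num)
    calc (1:ℝ)/12 = (1 / Real.sqrt 12)^2 := by rw [div_pow, hs]; norm_num
    _ < a₁ ^ 2 := this
  have hx3 : a₁ ^ 2 < 1 / 3 := by nlinarith [sq_nonneg a₄]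
  have key : 3 * a₁ * (8 * a₁ ^ 4 - 9 * a₁ ^ 2 + 2) = a₄ ^ 3 * (8 * a₁ ^ 2 + 1) := by
    linear_combination e₂ + (8 * a₁ ^ 3 - 3 * a₁ ^ 2 * a₄ - a₁ * a₄ ^ 2 - 6 * a₁) * e₁
  have hR : 0 < a₄ ^ 3 * (8 * a₁ ^ 2 + 1) := by positivity
  have hL : 0 < 8 * a₁ ^ 4 - 9 * a₁ ^ 2 + 2 := by nlinarith
  have hD : (4 * a₁ ^ 2 - 1) *
      (576 * a₁ ^ 8 - 504 * a₁ ^ 6 + 171 * a₁ ^ 4 - 25 * a₁ ^ 2 + 1) = 0 := by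
    linear_combination
      (3 * a₁ * (8 * a₁ ^ 4 - 9 * a₁ ^ 2 + 2) + a₄ ^ 3 * (8 * a₁ ^ 2 + 1)) * key +
      (a₄ ^ 4 + a₄ ^ 2 * (1 - 3 * a₁ ^ 2) + (1 - 3 * a₁ ^ 2) ^ 2) * (8 * a₁ ^ 2 + 1) ^ 2 * e₁
  have hq : 576 * a₁ ^ 8 - 504 * a₁ ^ 6 + 171 * a₁ ^ 4 - 25 * a₁ ^ 2 + 1 < 0 := by
    nlinarith [mul_pos (by nlinarith : (0:ℝ) < 12 * a₁ ^ 2 - 1) hL,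
      sq_nonneg (a₁ ^ 2 - 1/4), sq_nonneg (a₁ ^ 2 - 1/5), hx, hx3, hL,
      mul_pos (mul_pos (by nlinarith : (0:ℝ) < 12 * a₁ ^ 2 - 1)
        (by nlinarith : (0:ℝ) < 12 * a₁ ^ 2 - 1)) hL]
  have h14 : a₁ ^ 2 = 1 / 4 := by
    rcases mul_eq_zero.mp hD with h | h
    · linarith
    · linarith
  have ha1 : a₁ = 1 / 2 := by nlinarith
  have ha4 : a₄ = 1 / 2 := by nlinarith
  exact ⟨ha1, ha4⟩
end
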